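/- arXiv:2003.00734 — 6 statements merged into one kernel-verified Lean document; each statement's English description precedes it below -/
import Mathlib

section
/- Let p ≥ 2 and q = 2^p. For h ∈ F_q^*, let P_h be the (q−1)×(q−1) matrix over F_2, with rows and columns indexed by F_q^*, whose (x, y) entry is 1 if h·x = y and 0 otherwise (the permutation matrix of multiplication by h). Then the number of quadruples (a, b, c, d) ∈ (F_q^*)^4 for which the 2×2 block matrix with blocks (P_a, P_b; P_c, P_d) contains a length-4 cycle equals (q−1)^3. Hence, with the four labels chosen independently and uniformly from F_q^*, the probability p_4 that a length-4 symbol-level cycle results in length-4 bit-level cycles is 1/(q−1). -/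
/-!
Every block of `(P_a, P_b; P_c, P_d)` is a permutation matrix, so each row and each column meets
each block in exactly one 1. A 4-cycle therefore uses both block rows and both block columns, and
its rows `x, x'` and columns `y, z` satisfy `a x = y = c x'` and `b x = z = d x'`, whence
`a d = b c`. Conversely, if `a d = b c`, the rows `(0, 1), (1, a / c)` and the columns
`(0, a), (1, b)` form a 4-cycle. So the quadruples with a 4-cycle are those with `d = b c / a`,
and there are `(q - 1)^3` of them.
-/

open Classical

/-- A binary matrix contains a length-4 cycle iff there are two distinct rows and two
distinct columns all four of whose intersection entries equal 1. -/
def HasL4Cycle {R C : Type*} (M : Matrix R C (ZMod 2)) : Prop :=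
  ∃ r1 r2 : R, ∃ c1 c2 : C, r1 ≠ r2 ∧ c1 ≠ c2 ∧
    M r1 c1 = 1 ∧ M r1 c2 = 1 ∧ M r2 c1 = 1 ∧ M r2 c2 = 1

/-- The permutation matrix of multiplication by a nonzero element `h` of `F_q`:
entry `(x,y)` is 1 iff `h·x = y`. -/
noncomputable def permMulMat (p : ℕ) (h : {x : GaloisField 2 p // x ≠ 0}) :
    Matrix {x : GaloisField 2 p // x ≠ 0} {x : GaloisField 2 p // x ≠ 0} (ZMod 2) :=
  Matrix.of fun x y => if h.1 * x.1 = y.1 then 1 else 0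

/-- The 2×2 block matrix with blocks `(P_a, P_b; P_c, P_d)`. -/
noncomputable def blockMulMat (p : ℕ) (a b c d : {x : GaloisField 2 p // x ≠ 0}) :
    Matrix (Fin 2 × {x : GaloisField 2 p // x ≠ 0})
      (Fin 2 × {x : GaloisField 2 p // x ≠ 0}) (ZMod 2) :=
  Matrix.of fun rc cc => permMulMat p (![![a, b], ![c, d]] rc.1 cc.1) rc.2 cc.2

section CommGroupWithZero

variable {G : Type*} [CommGroupWithZero G]

theorem mul_eq_mul_of_mul_eq_of_mul_eq {a b c d x x' y z : G} (hx : x ≠ 0) (hx' : x' ≠ 0)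
    (hay : a * x = y) (hcy : c * x' = y) (hbz : b * x = z) (hdz : d * x' = z) :
    a * d = b * c := by
  apply mul_right_cancel₀ (mul_ne_zero hx hx')
  calc a * d * (x * x') = (a * x) * (d * x') := mul_mul_mul_comm a d x x'
    _ = (b * x) * (c * x') := by rw [hay, hdz, ← hcy, ← hbz, mul_comm]
    _ = b * c * (x * x') := mul_mul_mul_comm b x c x'

variable (G) in
def mulEqMulQuadruplesEquiv :
    {t : {x : G // x ≠ 0} × {x : G // x ≠ 0} × {x : G // x ≠ 0} × {x : G // x ≠ 0} //
        t.1.1 * t.2.2.2.1 = t.2.1.1 * t.2.2.1.1} ≃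
      {x : G // x ≠ 0} × {x : G // x ≠ 0} × {x : G // x ≠ 0} where
  toFun t := (t.1.1, t.1.2.1, t.1.2.2.1)
  invFun s := ⟨(s.1, s.2.1, s.2.2, ⟨s.2.1.1 * s.2.2.1 / s.1.1,
      div_ne_zero (mul_ne_zero s.2.1.2 s.2.2.2) s.1.2⟩), mul_div_cancel₀ _ s.1.2⟩
  left_inv := by
    rintro ⟨⟨a, b, c, d⟩, had⟩
    refine Subtype.ext (Prod.ext rfl (Prod.ext rfl (Prod.ext rfl (Subtype.ext ?_))))
    exact div_eq_of_eq_mul a.2 (by rw [← had, mul_comm])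
  right_inv _ := rfl

end CommGroupWithZero

theorem Fin.two_mul_eq_mul_iff {α : Type*} [CommMagma α] (M : Fin 2 → Fin 2 → α)
    {i j k l : Fin 2} (hij : i ≠ j) (hkl : k ≠ l) :
    M i k * M j l = M i l * M j k ↔ M 0 0 * M 1 1 = M 0 1 * M 1 0 := by
  fin_cases i <;> fin_cases j <;> fin_cases k <;> fin_cases l <;> simp_all [mul_comm, eq_comm]

theorem blockMulMat_apply_eq_one_iff (p : ℕ) (a b c d : {x : GaloisField 2 p // x ≠ 0})
    (i k : Fin 2) (x y : {x : GaloisField 2 p // x ≠ 0}) :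
    blockMulMat p a b c d (i, x) (k, y) = 1 ↔ (![![a, b], ![c, d]] i k).1 * x.1 = y.1 := by
  simp [blockMulMat, permMulMat]

theorem hasL4Cycle_blockMulMat_iff (p : ℕ) (a b c d : {x : GaloisField 2 p // x ≠ 0}) :
    HasL4Cycle (blockMulMat p a b c d) ↔ a.1 * d.1 = b.1 * c.1 := by
  simp only [HasL4Cycle, Prod.exists, blockMulMat_apply_eq_one_iff]
  constructor
  · rintro ⟨i, x, j, x', k, y, l, z, hr, hc, hxy, hxz, hx'y, hx'z⟩
    have hij : i ≠ j := by
      rintro rfl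
      exact hr (congrArg _ (Subtype.ext (mul_left_cancel₀ (![![a, b], ![c, d]] i k).2
        (hxy.trans hx'y.symm))))
    have hkl : k ≠ l := by
      rintro rfl
      exact hc (congrArg _ (Subtype.ext (hxy.symm.trans hxz)))
    exact (Fin.two_mul_eq_mul_iff (fun i k ↦ (![![a, b], ![c, d]] i k).1) hij hkl).1
      (mul_eq_mul_of_mul_eq_of_mul_eq x.2 x'.2 hxy hx'y hxz hx'z)
  · intro had
    refine ⟨0, ⟨1, one_ne_zero⟩, 1, ⟨a.1 / c.1, div_ne_zero a.2 c.2⟩, 0, a, 1, b,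
      by simp, by simp, ?_, ?_, ?_, ?_⟩
    · simp
    · simp
    · simp [mul_div_cancel₀ _ c.2]
    · simpa [mul_div_assoc', mul_comm _ a.1, had] using mul_div_cancel_right₀ b.1 c.2

theorem GaloisField.nat_card_nonzero (p : ℕ) [Fact p.Prime] {n : ℕ} (hn : n ≠ 0) :
    Nat.card {x : GaloisField p n // x ≠ 0} = p ^ n - 1 := by
  rw [Nat.card_congr unitsEquivNeZero.symm, Nat.card_units, GaloisField.card p n hn]

/-- the number of quadruples `(a,b,c,d) ∈ (F_q^*)^4` whose block matrix
`(P_a, P_b; P_c, P_d)` contains a length-4 cycle is `(q-1)^3`; hence `p_4 = 1/(q-1)`. -/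
theorem stmt_1 (p : ℕ) (hp : 2 ≤ p) :
    Nat.card {t : {x : GaloisField 2 p // x ≠ 0} × {x : GaloisField 2 p // x ≠ 0} ×
        {x : GaloisField 2 p // x ≠ 0} × {x : GaloisField 2 p // x ≠ 0} //
        HasL4Cycle (blockMulMat p t.1 t.2.1 t.2.2.1 t.2.2.2)} = (2 ^ p - 1) ^ 3 ∧
    ((Nat.card {t : {x : GaloisField 2 p // x ≠ 0} × {x : GaloisField 2 p // x ≠ 0} ×
        {x : GaloisField 2 p // x ≠ 0} × {x : GaloisField 2 p // x ≠ 0} //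
        HasL4Cycle (blockMulMat p t.1 t.2.1 t.2.2.1 t.2.2.2)} : ℚ)) /
      (((2 ^ p - 1 : ℕ) : ℚ) ^ 4) = 1 / ((2 ^ p - 1 : ℕ) : ℚ) := by
  have hcard : Nat.card {t : {x : GaloisField 2 p // x ≠ 0} × {x : GaloisField 2 p // x ≠ 0} ×
      {x : GaloisField 2 p // x ≠ 0} × {x : GaloisField 2 p // x ≠ 0} //
      HasL4Cycle (blockMulMat p t.1 t.2.1 t.2.2.1 t.2.2.2)} = (2 ^ p - 1) ^ 3 := by
    rw [Nat.card_congr ((Equiv.subtypeEquivRight fun t ↦ hasL4Cycle_blockMulMat_iff p _ _ _ _).trans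
      (mulEqMulQuadruplesEquiv _)), Nat.card_prod, Nat.card_prod,
      GaloisField.nat_card_nonzero 2 (by omega)]
    ring
  refine ⟨hcard, ?_⟩
  rw [hcard, Nat.cast_pow]
  rcases eq_or_ne ((2 ^ p - 1 : ℕ) : ℚ) 0 with h | h
  · simp [h]
  · field_simp
end

section
/- Let α be a nonempty finite type with decidable equality, and let σ11, σ12, σ21, σ22 be permutations of α. Let M be the binary matrix indexed by Fin 2 × α (rows) and Fin 2 × α (columns) whose ((i,r),(j,c)) entry is 1 iff σ_{ij}(r) = c. Then M contains a length-4 cycle if and only if there exists x ∈ α with σ12(σ11⁻¹(x)) = σ22(σ21⁻¹(x)), i.e., the permutations σ12∘σ11⁻¹ and σ22∘σ21⁻¹ agree at some point. -/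
/-- The 2×2 block matrix of permutation matrices: entry `((i,r),(j,c))` is 1 iff
`σ_{ij} r = c`, where `σ_{00} = σ11`, `σ_{01} = σ12`, `σ_{10} = σ21`, `σ_{11} = σ22`. -/
def permBlockMat {α : Type*} [DecidableEq α] (σ11 σ12 σ21 σ22 : Equiv.Perm α) :
    Matrix (Fin 2 × α) (Fin 2 × α) (ZMod 2) :=
  Matrix.of fun rc cc => if (![![σ11, σ12], ![σ21, σ22]] rc.1 cc.1) rc.2 = cc.2 then 1 else 0

section BlockPermMatrix

variable {ι κ α : Type*}

def blockPermMatrix [DecidableEq α] (P : ι → κ → Equiv.Perm α) :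
    Matrix (ι × α) (κ × α) (ZMod 2) :=
  Matrix.of fun rc cc => if P rc.1 cc.1 rc.2 = cc.2 then 1 else 0

lemma blockPermMatrix_apply_eq_one_iff [DecidableEq α] (P : ι → κ → Equiv.Perm α)
    (i : ι) (a : α) (k : κ) (c : α) : blockPermMatrix P (i, a) (k, c) = 1 ↔ P i k a = c := by
  rw [blockPermMatrix, Matrix.of_apply]
  split_ifs with h <;> simp [h]

lemma hasL4Cycle_blockPermMatrix_iff [DecidableEq α] (P : ι → κ → Equiv.Perm α) :
    HasL4Cycle (blockPermMatrix P) ↔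
      ∃ i j k l, i ≠ j ∧ k ≠ l ∧ ∃ a b, P i k a = P j k b ∧ P i l a = P j l b := by
  simp only [HasL4Cycle, Prod.exists, blockPermMatrix_apply_eq_one_iff]
  constructor
  · rintro ⟨i, a, j, b, k, c, l, d, hrow, hcol, hik, hil, hjk, hjl⟩
    have hij : i ≠ j := by
      rintro rfl
      exact hrow (by rw [(P i k).injective (hik.trans hjk.symm)])
    have hkl : k ≠ l := by
      rintro rfl
      exact hcol (by rw [← hik, ← hil])
    exact ⟨i, j, k, l, hij, hkl, a, b, hik.trans hjk.symm, hil.trans hjl.symm⟩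
  · rintro ⟨i, j, k, l, hij, hkl, a, b, hk, hl⟩
    exact ⟨i, a, j, b, k, _, l, _, fun h => hij (Prod.ext_iff.1 h).1,
      fun h => hkl (Prod.ext_iff.1 h).1, rfl, rfl, hk.symm, hl.symm⟩

lemma Fin.exists_ne_ne_iff_of_symm {p : Fin 2 → Fin 2 → Fin 2 → Fin 2 → Prop}
    (hrow : ∀ i j k l, p i j k l → p j i k l) (hcol : ∀ i j k l, p i j k l → p i j l k) :
    (∃ i j k l, i ≠ j ∧ k ≠ l ∧ p i j k l) ↔ p 0 1 0 1 := by
  refine ⟨?_, fun h => ⟨0, 1, 0, 1, by decide, by decide, h⟩⟩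
  rintro ⟨i, j, k, l, hij, hkl, h⟩
  fin_cases i <;> fin_cases j <;> fin_cases k <;> fin_cases l
  all_goals first
    | exact absurd rfl hij
    | exact absurd rfl hkl
    | exact h
    | exact hrow _ _ _ _ h
    | exact hcol _ _ _ _ h
    | exact hrow _ _ _ _ (hcol _ _ _ _ h)

lemma Equiv.exists_apply_eq_and_apply_eq_iff (e₁ e₂ : α ≃ ι) (f₁ f₂ : α ≃ κ) :
    (∃ a b, e₁ a = e₂ b ∧ f₁ a = f₂ b) ↔ ∃ x, f₁ (e₁.symm x) = f₂ (e₂.symm x) := by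
  constructor
  · rintro ⟨a, b, he, hf⟩
    exact ⟨e₁ a, by rw [e₁.symm_apply_apply, he, e₂.symm_apply_apply, hf]⟩
  · rintro ⟨x, hx⟩
    exact ⟨e₁.symm x, e₂.symm x, by simp, hx⟩

end BlockPermMatrix

theorem stmt_2_general {α : Type*} [DecidableEq α]
    (σ11 σ12 σ21 σ22 : Equiv.Perm α) :
    HasL4Cycle (permBlockMat σ11 σ12 σ21 σ22) ↔
      ∃ x : α, σ12 (σ11⁻¹ x) = σ22 (σ21⁻¹ x) := by
  let P : Fin 2 → Fin 2 → Equiv.Perm α := ![![σ11, σ12], ![σ21, σ22]]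
  change HasL4Cycle (blockPermMatrix P) ↔ _
  rw [hasL4Cycle_blockPermMatrix_iff, Fin.exists_ne_ne_iff_of_symm]
  · exact Equiv.exists_apply_eq_and_apply_eq_iff σ11 σ21 σ12 σ22
  · rintro i j k l ⟨a, b, hk, hl⟩
    exact ⟨b, a, hk.symm, hl.symm⟩
  · rintro i j k l ⟨a, b, hk, hl⟩
    exact ⟨a, b, hl, hk⟩

/-- the block matrix of the four permutation matrices contains a length-4
cycle iff the permutations `σ12 ∘ σ11⁻¹` and `σ22 ∘ σ21⁻¹` agree at some point. -/
theorem stmt_2 {α : Type*} [Fintype α] [DecidableEq α] [Nonempty α]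
    (σ11 σ12 σ21 σ22 : Equiv.Perm α) :
    HasL4Cycle (permBlockMat σ11 σ12 σ21 σ22) ↔
      ∃ x : α, σ12 (σ11⁻¹ x) = σ22 (σ21⁻¹ x) :=
  stmt_2_general σ11 σ12 σ21 σ22
end

section
/- Let p ≥ 2 and q = 2^p. The number of sets S of nonzero vectors of F_2^p with |S| = 2^(p−1) − 1 that do NOT span F_2^p equals q − 1 = 2^p − 1. Consequently, a uniformly random such set spans F_2^p with probability 1 − (q−1)/C(q−1, q/2 − 1). (This is item 2 of Theorem 2: when wt(Ψ^e_j) = q/2 − 1, the symbol x̄_j can be resolved from v^e_j with probability 1 − (q−1)/binom(q−1, q/2−1).) -/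
/-!
A set `S` of nonzero vectors that does not span lies in some hyperplane `ker f`, `f ≠ 0`.
Such a hyperplane has `2 ^ (p - 1) - 1` nonzero vectors, so a nonspanning `S` of exactly that
size is a punctured hyperplane. Over `ZMod 2` a functional is determined by its kernel, so
these sets correspond to the `2 ^ p - 1` nonzero functionals. The probability is the
complementary count divided by `C(2 ^ p - 1, 2 ^ (p - 1) - 1)`.
-/

open Finset Module

theorem Nat.card_subtype_ne {α : Type*} [Finite α] (a : α) :
    Nat.card {x // x ≠ a} = Nat.card α - 1 := by
  classical
  rw [← Nat.card_congr (Equiv.optionSubtypeNe a), Finite.card_option, Nat.add_sub_cancel]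

theorem natCard_finset_notMem_card_eq {α : Type*} [Finite α] (a : α) (k : ℕ) :
    Nat.card {S : Finset α // a ∉ S ∧ #S = k} = (Nat.card α - 1).choose k := by
  classical
  have := Fintype.ofFinite α
  have hfilter : ({S | a ∉ S ∧ #S = k} : Finset (Finset α)) = powersetCard k (univ.erase a) := by
    ext S
    simp [mem_powersetCard, subset_erase]
  rw [Nat.card_eq_fintype_card, Fintype.card_subtype, hfilter, card_powersetCard,
    card_erase_of_mem (mem_univ a), card_univ, Nat.card_eq_fintype_card]

theorem natCard_and_add_natCard_and_not {α : Type*} [Finite α] (P Q R : α → Prop) :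
    Nat.card {x // P x ∧ Q x ∧ R x} + Nat.card {x // P x ∧ Q x ∧ ¬R x} =
      Nat.card {x // P x ∧ Q x} := by
  classical
  have := Fintype.ofFinite α
  simp only [Nat.card_eq_fintype_card, Fintype.card_subtype]
  rw [← card_filter_add_card_filter_not (s := {x | P x ∧ Q x}) (p := R), filter_filter,
    filter_filter]
  simp only [and_assoc]

namespace Module.Dual

variable {K V : Type*} [Field K] [AddCommGroup V] [Module K V]

theorem natCard_ker [FiniteDimensional K V] {f : Dual K V} (hf : f ≠ 0) :
    Nat.card (LinearMap.ker f) = Nat.card K ^ (finrank K V - 1) := by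
  rw [Module.natCard_eq_pow_finrank (K := K), ← f.finrank_ker_add_one_of_ne_zero hf,
    Nat.add_sub_cancel]

theorem eq_of_ker_eq_zmod_two [Module (ZMod 2) V] [FiniteDimensional (ZMod 2) V]
    {f g : Dual (ZMod 2) V}
    (h : LinearMap.ker f = LinearMap.ker g) : f = g := by
  by_cases hf : f = 0
  · rw [hf, LinearMap.ker_zero, eq_comm, LinearMap.ker_eq_top] at h
    rw [hf, h]
  obtain ⟨x, hx⟩ : ∃ x, f x ≠ 0 := by simpa [DFunLike.ext_iff] using hf
  have hgx : g x ≠ 0 := by simpa [← LinearMap.mem_ker, ← h] using hx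
  have one_of_ne_zero : ∀ a : ZMod 2, a ≠ 0 → a = 1 := by decide
  exact eq_of_ker_eq_of_apply_eq x h
    ((one_of_ne_zero _ hx).trans (one_of_ne_zero _ hgx).symm) hx

variable [Fintype V] [DecidableEq V] [DecidableEq K]

def puncturedKer (f : Dual K V) : Finset V := ({v | f v = 0} : Finset V).erase 0

theorem mem_puncturedKer {f : Dual K V} {v : V} :
    v ∈ puncturedKer f ↔ v ≠ 0 ∧ f v = 0 := by
  simp [puncturedKer]

theorem card_puncturedKer {f : Dual K V} (hf : f ≠ 0) :
    #(puncturedKer f) = Nat.card K ^ (finrank K V - 1) - 1 := by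
  have hker : #({v | f v = 0} : Finset V) = Nat.card (LinearMap.ker f) := by
    rw [← Fintype.card_subtype, ← Nat.card_eq_fintype_card]; rfl
  rw [puncturedKer, card_erase_of_mem (by simp), hker, natCard_ker hf]

theorem span_puncturedKer_ne_top {f : Dual K V} (hf : f ≠ 0) :
    Submodule.span K (puncturedKer f : Set V) ≠ ⊤ := by
  have hle : Submodule.span K (puncturedKer f : Set V) ≤ LinearMap.ker f :=
    Submodule.span_le.2 fun v hv => (mem_puncturedKer.1 hv).2
  intro htop
  rw [htop, top_le_iff, LinearMap.ker_eq_top] at hle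
  exact hf hle

theorem exists_puncturedKer_eq {S : Finset V} (h0 : (0 : V) ∉ S)
    (hcard : #S = Nat.card K ^ (finrank K V - 1) - 1)
    (hspan : Submodule.span K (S : Set V) ≠ ⊤) :
    ∃ f : Dual K V, f ≠ 0 ∧ puncturedKer f = S := by
  obtain ⟨f, hf, hle⟩ := (Submodule.span K (S : Set V)).exists_le_ker_of_lt_top hspan.lt_top
  have hsub : S ⊆ puncturedKer f := fun v hv =>
    mem_puncturedKer.2 ⟨ne_of_mem_of_not_mem hv h0, hle (Submodule.subset_span hv)⟩
  exact ⟨f, hf, (eq_of_subset_of_card_le hsub (by rw [card_puncturedKer hf, hcard])).symm⟩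

theorem ker_eq_of_puncturedKer_eq {f g : Dual K V} (h : puncturedKer f = puncturedKer g) :
    LinearMap.ker f = LinearMap.ker g := by
  ext v
  by_cases hv : v = 0
  · simp [hv]
  · simpa [mem_puncturedKer, hv] using congrArg (v ∈ ·) h

end Module.Dual

open Module.Dual in
theorem natCard_nonspanning_zmod_two (V : Type*) [AddCommGroup V] [Module (ZMod 2) V]
    [Finite V] :
    Nat.card {S : Finset V // (0 : V) ∉ S ∧ #S = 2 ^ (finrank (ZMod 2) V - 1) - 1 ∧
      Submodule.span (ZMod 2) (S : Set V) ≠ ⊤} = 2 ^ finrank (ZMod 2) V - 1 := by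
  classical
  have := Fintype.ofFinite V
  let toSet (f : {f : Dual (ZMod 2) V // f ≠ 0}) : {S : Finset V // (0 : V) ∉ S ∧
      #S = 2 ^ (finrank (ZMod 2) V - 1) - 1 ∧ Submodule.span (ZMod 2) (S : Set V) ≠ ⊤} :=
    ⟨puncturedKer f.1, by simp [mem_puncturedKer], by simpa using card_puncturedKer f.2,
      span_puncturedKer_ne_top f.2⟩
  have hbij : Function.Bijective toSet := by
    refine ⟨fun f g h => Subtype.ext
      (eq_of_ker_eq_zmod_two (ker_eq_of_puncturedKer_eq (congrArg Subtype.val h))), ?_⟩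
    rintro ⟨S, h0, hcard, hspan⟩
    obtain ⟨f, hf, rfl⟩ := exists_puncturedKer_eq h0 (by simpa using hcard) hspan
    exact ⟨⟨f, hf⟩, rfl⟩
  have : Finite (Dual (ZMod 2) V) := Module.finite_of_finite (ZMod 2)
  rw [← Nat.card_congr (Equiv.ofBijective toSet hbij), Nat.card_subtype_ne,
    Module.natCard_eq_pow_finrank (K := ZMod 2), Subspace.dual_finrank_eq, Nat.card_zmod]

theorem stmt_11_general (p : ℕ) :
    Nat.card {S : Finset (Fin p → ZMod 2) //
        (0 : Fin p → ZMod 2) ∉ S ∧ S.card = 2 ^ (p - 1) - 1 ∧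
        Submodule.span (ZMod 2) (↑S : Set (Fin p → ZMod 2)) ≠ ⊤} = 2 ^ p - 1 ∧
    ((Nat.card {S : Finset (Fin p → ZMod 2) //
        (0 : Fin p → ZMod 2) ∉ S ∧ S.card = 2 ^ (p - 1) - 1 ∧
        Submodule.span (ZMod 2) (↑S : Set (Fin p → ZMod 2)) = ⊤} : ℚ)) /
      ((Nat.card {S : Finset (Fin p → ZMod 2) //
        (0 : Fin p → ZMod 2) ∉ S ∧ S.card = 2 ^ (p - 1) - 1} : ℚ))
      = 1 - ((2 ^ p - 1 : ℕ) : ℚ) / ((Nat.choose (2 ^ p - 1) (2 ^ p / 2 - 1) : ℕ) : ℚ) := by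
  have hnon := natCard_nonspanning_zmod_two (Fin p → ZMod 2)
  rw [Module.finrank_fin_fun] at hnon
  refine ⟨hnon, ?_⟩
  have hsplit := natCard_and_add_natCard_and_not (fun S : Finset (Fin p → ZMod 2) => 0 ∉ S)
    (fun S => #S = 2 ^ (p - 1) - 1)
    (fun S => Submodule.span (ZMod 2) (S : Set (Fin p → ZMod 2)) = ⊤)
  have hcard : Nat.card (Fin p → ZMod 2) = 2 ^ p := by simp
  rw [hnon, natCard_finset_notMem_card_eq, hcard] at hsplit
  have hhalf : 2 ^ p / 2 - 1 = 2 ^ (p - 1) - 1 := by cases p <;> simp [pow_succ]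
  have hchoose : ((2 ^ p - 1).choose (2 ^ (p - 1) - 1) : ℚ) ≠ 0 := by
    have : 2 ^ (p - 1) ≤ 2 ^ p := Nat.pow_le_pow_right two_pos (Nat.sub_le p 1)
    exact_mod_cast (Nat.choose_pos (by omega)).ne'
  rw [natCard_finset_notMem_card_eq, hcard, hhalf, eq_sub_iff_add_eq, ← add_div,
    div_eq_one_iff_eq hchoose]
  exact_mod_cast hsplit

/-- the number of sets of `2^(p−1) − 1` nonzero vectors of `F_2^p` that
do not span `F_2^p` equals `2^p − 1`; consequently a uniformly random such set spans
with probability `1 − (q−1)/C(q−1, q/2 − 1)` (item 2 of Theorem 2). -/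
theorem stmt_11 (p : ℕ) (hp : 2 ≤ p) :
    Nat.card {S : Finset (Fin p → ZMod 2) //
        (0 : Fin p → ZMod 2) ∉ S ∧ S.card = 2 ^ (p - 1) - 1 ∧
        Submodule.span (ZMod 2) (↑S : Set (Fin p → ZMod 2)) ≠ ⊤} = 2 ^ p - 1 ∧
    ((Nat.card {S : Finset (Fin p → ZMod 2) //
        (0 : Fin p → ZMod 2) ∉ S ∧ S.card = 2 ^ (p - 1) - 1 ∧
        Submodule.span (ZMod 2) (↑S : Set (Fin p → ZMod 2)) = ⊤} : ℚ)) /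
      ((Nat.card {S : Finset (Fin p → ZMod 2) //
        (0 : Fin p → ZMod 2) ∉ S ∧ S.card = 2 ^ (p - 1) - 1} : ℚ))
      = 1 - ((2 ^ p - 1 : ℕ) : ℚ) / ((Nat.choose (2 ^ p - 1) (2 ^ p / 2 - 1) : ℕ) : ℚ) :=
  stmt_11_general p
end

section
/- Let p ≥ 2 and q = 2^p. Let Φ be the p×(q−1) matrix over F_2 whose columns φ(0), …, φ(q−2) are the distinct nonzero vectors of F_2^p, and let Ψ be an invertible p×p matrix over F_2. For any p×(q−1) matrix B with B ≼ Φ, define f_ω(B,Ψ) as the (q−1)×(q−1) matrix over F_2 whose (i,j) entry is 1 iff the j-th column of B equals Ψᵀ·φ(i). Then for all B, B′ with B ≼ Φ and B′ ≼ Φ: B′ ≼ B if and only if f_ω(B′,Ψ) ≼ f_ω(B,Ψ). (Second assertion of Lemma 1.) -/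
/-!
Column `j` of `f_ω(B,Ψ)` is the indicator of the rows `i` with `Ψᵀ φ(i) = B_j`, so it depends
only on the column `B_j`. Since `Ψᵀ` is invertible, the vectors `Ψᵀ φ(i)` are exactly the nonzero
vectors of `F_2^p`: a zero column of `B` gives a zero column of `f_ω(B,Ψ)`, while a nonzero
column `B'_j` is detected by the row `i` with `Ψᵀ φ(i) = B'_j`, which forces `B_j = B'_j`.
-/

open Matrix

/-- `A ≼ C`: every column of `A` is either the zero column or equals the
corresponding column of `C`. -/
def ColPrec {m n : ℕ} (A C : Matrix (Fin m) (Fin n) (ZMod 2)) : Prop :=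
  ∀ j, (∀ i, A i j = 0) ∨ (∀ i, A i j = C i j)

/-- `f_ω(B,Ψ)`: the `(q−1)×(q−1)` matrix over `F_2` whose `(i,j)` entry is 1 iff the
`j`-th column of `B` equals `Ψᵀ·φ(i)`. -/
def fOmegaB (p : ℕ) (φ : Fin (2 ^ p - 1) → (Fin p → ZMod 2))
    (B : Matrix (Fin p) (Fin (2 ^ p - 1)) (ZMod 2))
    (Ψ : Matrix (Fin p) (Fin p) (ZMod 2)) :
    Matrix (Fin (2 ^ p - 1)) (Fin (2 ^ p - 1)) (ZMod 2) :=
  Matrix.of fun i j => if (fun i' => B i' j) = Ψᵀ.mulVec (φ i) then 1 else 0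

theorem colPrec_iff_transpose {m n : ℕ} (A C : Matrix (Fin m) (Fin n) (ZMod 2)) :
    ColPrec A C ↔ ∀ j, Aᵀ j = 0 ∨ Aᵀ j = Cᵀ j := by
  simp only [ColPrec, funext_iff, transpose_apply, Pi.zero_apply]

section UnitMulVec

variable {ι n R : Type*} [Fintype n] [DecidableEq n] [CommRing R]
  {M : Matrix n n R} {φ : ι → n → R}

theorem IsUnit.mulVec_ne_zero (hM : IsUnit M) (hφ0 : ∀ i, φ i ≠ 0) (i : ι) :
    M *ᵥ φ i ≠ 0 := fun h =>
  hφ0 i <| mulVec_injective_of_isUnit hM <| h.trans (mulVec_zero M).symm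

theorem IsUnit.exists_mulVec_eq (hM : IsUnit M)
    (hφsurj : ∀ v : n → R, v ≠ 0 → ∃ i, φ i = v) {v : n → R} (hv : v ≠ 0) :
    ∃ i, M *ᵥ φ i = v := by
  obtain ⟨u, rfl⟩ := mulVec_surjective_iff_isUnit.mpr hM v
  obtain ⟨i, rfl⟩ := hφsurj u fun hu => hv (hu ▸ mulVec_zero M)
  exact ⟨i, rfl⟩

end UnitMulVec

section FOmegaB

variable {p : ℕ} {φ : Fin (2 ^ p - 1) → (Fin p → ZMod 2)}
  {Ψ : Matrix (Fin p) (Fin p) (ZMod 2)}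
  {B B' : Matrix (Fin p) (Fin (2 ^ p - 1)) (ZMod 2)}

theorem fOmegaB_apply (i j : Fin (2 ^ p - 1)) :
    fOmegaB p φ B Ψ i j = if Bᵀ j = Ψᵀ *ᵥ φ i then 1 else 0 :=
  rfl

theorem fOmegaB_apply_eq_one_iff (i j : Fin (2 ^ p - 1)) :
    fOmegaB p φ B Ψ i j = 1 ↔ Bᵀ j = Ψᵀ *ᵥ φ i := by
  rw [fOmegaB_apply]
  split_ifs with h
  · exact iff_of_true rfl h
  · exact iff_of_false zero_ne_one h

theorem transpose_fOmegaB_eq_zero (hne : ∀ i, Ψᵀ *ᵥ φ i ≠ 0) {j : Fin (2 ^ p - 1)}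
    (hj : Bᵀ j = 0) : (fOmegaB p φ B Ψ)ᵀ j = 0 := by
  ext i
  simp [fOmegaB_apply, hj, (hne i).symm]

theorem transpose_fOmegaB_congr {j : Fin (2 ^ p - 1)} (hj : B'ᵀ j = Bᵀ j) :
    (fOmegaB p φ B' Ψ)ᵀ j = (fOmegaB p φ B Ψ)ᵀ j := by
  ext i
  simp only [transpose_apply, fOmegaB_apply, hj]

theorem colPrec_fOmegaB_iff (hne : ∀ i, Ψᵀ *ᵥ φ i ≠ 0)
    (hcover : ∀ j, B'ᵀ j ≠ 0 → ∃ i, Ψᵀ *ᵥ φ i = B'ᵀ j) :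
    ColPrec B' B ↔ ColPrec (fOmegaB p φ B' Ψ) (fOmegaB p φ B Ψ) := by
  simp only [colPrec_iff_transpose]
  refine ⟨fun h j => (h j).imp (transpose_fOmegaB_eq_zero hne) transpose_fOmegaB_congr,
    fun h j => or_iff_not_imp_left.mpr fun h0 => ?_⟩
  obtain ⟨i, hi⟩ := hcover j h0
  have hB'ij : fOmegaB p φ B' Ψ i j = 1 := (fOmegaB_apply_eq_one_iff i j).mpr hi.symm
  rcases h j with hz | heq
  · exact absurd (congrFun hz i) (by simp [hB'ij])
  · have hBij : fOmegaB p φ B Ψ i j = 1 := (congrFun heq i).symm.trans hB'ij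
    rw [(fOmegaB_apply_eq_one_iff i j).mp hBij, hi]

end FOmegaB

theorem stmt_13_general (p : ℕ)
    (φ : Fin (2 ^ p - 1) → (Fin p → ZMod 2))
    (hφ0 : ∀ j, φ j ≠ 0)
    (hφsurj : ∀ v : Fin p → ZMod 2, v ≠ 0 → ∃ j, φ j = v)
    (Ψ : Matrix (Fin p) (Fin p) (ZMod 2)) (hΨ : IsUnit Ψ)
    (B B' : Matrix (Fin p) (Fin (2 ^ p - 1)) (ZMod 2)) :
    ColPrec B' B ↔ ColPrec (fOmegaB p φ B' Ψ) (fOmegaB p φ B Ψ) := by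
  have hΨt : IsUnit Ψᵀ := (isUnit_transpose Ψ).mpr hΨ
  exact colPrec_fOmegaB_iff (hΨt.mulVec_ne_zero hφ0)
    fun _ hj => hΨt.exists_mulVec_eq hφsurj hj

/-- second assertion of Lemma 1: for `B, B′ ≼ Φ` and invertible `Ψ`,
`B′ ≼ B` iff `f_ω(B′,Ψ) ≼ f_ω(B,Ψ)`. -/
theorem stmt_13 (p : ℕ) (hp : 2 ≤ p)
    (φ : Fin (2 ^ p - 1) → (Fin p → ZMod 2))
    (hφinj : Function.Injective φ)
    (hφ0 : ∀ j, φ j ≠ 0)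
    (hφsurj : ∀ v : Fin p → ZMod 2, v ≠ 0 → ∃ j, φ j = v)
    (Ψ : Matrix (Fin p) (Fin p) (ZMod 2)) (hΨ : IsUnit Ψ)
    (B B' : Matrix (Fin p) (Fin (2 ^ p - 1)) (ZMod 2))
    (hB : ColPrec B (Matrix.of fun i j => φ j i))
    (hB' : ColPrec B' (Matrix.of fun i j => φ j i)) :
    ColPrec B' B ↔ ColPrec (fOmegaB p φ B' Ψ) (fOmegaB p φ B Ψ) :=
  stmt_13_general p φ hφ0 hφsurj Ψ hΨ B B'
end

section
/- Let Λ be an M×N binary mother matrix and let Ω be a block matrix whose (i,j) block is a K×K permutation matrix whenever Λ(i,j) = 1 and the zero block whenever Λ(i,j) = 0. If Ω contains a length-4 cycle (rows r1 ≠ r2 and columns c1 ≠ c2 of Ω with all four entries equal to 1), then Λ contains a length-4 symbol-level cycle: there exist block-row indices i1 ≠ i2 and block-column indices j1 ≠ j2 with Λ(i1,j1) = Λ(i1,j2) = Λ(i2,j1) = Λ(i2,j2) = 1. In particular a length-4 bit-level cycle in Ω can only be caused by a length-4 symbol-level cycle in Λ. -/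
/-- The block matrix `Ω` built from a mother matrix `Λ` by replacing each 1 entry
`(i,j)` by the `K×K` permutation matrix of `σ i j` and each 0 entry by the zero block. -/
def blockOmega {M N K : ℕ} (Λ : Matrix (Fin M) (Fin N) (ZMod 2))
    (σ : Fin M → Fin N → Equiv.Perm (Fin K)) :
    Matrix (Fin M × Fin K) (Fin N × Fin K) (ZMod 2) :=
  Matrix.of fun rc cc =>
    if Λ rc.1 cc.1 = 1 ∧ σ rc.1 cc.1 rc.2 = cc.2 then 1 else 0

/-! Within one block of `Ω` the ones form a permutation matrix, so two ones of a cycle lying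
in the same block row (or block column) would have to share their bit row (or bit column).
Hence the four ones of a cycle of `Ω` lie in four distinct blocks, which form a cycle of `Λ`. -/

namespace blockOmega

variable {M N K : ℕ} {Λ : Matrix (Fin M) (Fin N) (ZMod 2)} {σ : Fin M → Fin N → Equiv.Perm (Fin K)}
  {i : Fin M} {j : Fin N} {r r' c c' : Fin K}

theorem apply_eq_one_iff : blockOmega Λ σ (i, r) (j, c) = 1 ↔ Λ i j = 1 ∧ σ i j r = c := by
  simp [blockOmega]

theorem mother_eq_one (h : blockOmega Λ σ (i, r) (j, c) = 1) : Λ i j = 1 :=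
  (apply_eq_one_iff.1 h).1

theorem row_eq_of_eq_one (h : blockOmega Λ σ (i, r) (j, c) = 1)
    (h' : blockOmega Λ σ (i, r') (j, c) = 1) : r = r' :=
  (σ i j).injective ((apply_eq_one_iff.1 h).2.trans (apply_eq_one_iff.1 h').2.symm)

theorem col_eq_of_eq_one (h : blockOmega Λ σ (i, r) (j, c) = 1)
    (h' : blockOmega Λ σ (i, r) (j, c') = 1) : c = c' :=
  (apply_eq_one_iff.1 h).2.symm.trans (apply_eq_one_iff.1 h').2

end blockOmega

/-- a length-4 bit-level cycle in `Ω` can only be caused by a length-4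
symbol-level cycle in the mother matrix `Λ`. -/
theorem stmt_16 (M N K : ℕ) (Λ : Matrix (Fin M) (Fin N) (ZMod 2))
    (σ : Fin M → Fin N → Equiv.Perm (Fin K))
    (h : HasL4Cycle (blockOmega Λ σ)) :
    ∃ i1 i2 : Fin M, ∃ j1 j2 : Fin N, i1 ≠ i2 ∧ j1 ≠ j2 ∧
      Λ i1 j1 = 1 ∧ Λ i1 j2 = 1 ∧ Λ i2 j1 = 1 ∧ Λ i2 j2 = 1 := by
  obtain ⟨⟨i1, r1⟩, ⟨i2, r2⟩, ⟨j1, c1⟩, ⟨j2, c2⟩, hr, hc, h11, h12, h21, h22⟩ := h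
  refine ⟨i1, i2, j1, j2, ?_, ?_, blockOmega.mother_eq_one h11, blockOmega.mother_eq_one h12,
    blockOmega.mother_eq_one h21, blockOmega.mother_eq_one h22⟩
  · rintro rfl
    exact hr (by rw [blockOmega.row_eq_of_eq_one h11 h21])
  · rintro rfl
    exact hc (by rw [blockOmega.col_eq_of_eq_one h11 h12])
end

section
/- Let Λ be an M×N binary mother matrix and let Ω be a block matrix whose (i,j) block is a K×K permutation matrix whenever Λ(i,j) = 1 and the zero block whenever Λ(i,j) = 0. If the Tanner graph of Λ is acyclic (Λ is cycle-free, g_h = 0), then the Tanner graph of Ω is acyclic (Ω has no bit-level cycles, g_s = 0). -/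
/-!
Forgetting the position inside a block, `(i, r) ↦ i` and `(j, c) ↦ j`, is a graph homomorphism
from the Tanner graph of `Ω` to that of `Λ`, and it is injective on every neighbourhood because
each block is a permutation matrix. Into a forest, such a map sends paths to paths: a repeated
vertex in the image of a path would force a backtrack, i.e. two distinct neighbours of a vertex
with the same image. A cycle `v, b, …, v` upstairs would thus give a path of length at least 2
between the adjacent vertices `b` and `v` of the forest, contradicting uniqueness of paths.
-/

/-- The Tanner graph of a binary matrix `H`: row vertices `Sum.inl i` and column
vertices `Sum.inr j` are adjacent iff `H i j = 1`; there are no adjacencies between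
two row vertices or between two column vertices. -/
def TannerGraph {m n : Type*} (H : Matrix m n (ZMod 2)) : SimpleGraph (m ⊕ n) where
  Adj u v :=
    (∃ i j, u = Sum.inl i ∧ v = Sum.inr j ∧ H i j = 1) ∨
    (∃ i j, u = Sum.inr j ∧ v = Sum.inl i ∧ H i j = 1)
  symm := by
    constructor
    rintro u v (⟨i, j, rfl, rfl, h⟩ | ⟨i, j, rfl, rfl, h⟩)
    · exact Or.inr ⟨i, j, rfl, rfl, h⟩
    · exact Or.inl ⟨i, j, rfl, rfl, h⟩
  loopless := by
    constructor
    rintro u (⟨i, j, rfl, huv, h⟩ | ⟨i, j, rfl, huv, h⟩) <;> simp at huv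

namespace SimpleGraph

variable {V W : Type*} {G : SimpleGraph V} {H : SimpleGraph W}

theorem Walk.IsPath.map_of_injOn_neighborSet (hH : H.IsAcyclic) (f : G →g H)
    (hf : ∀ v, Set.InjOn f (G.neighborSet v)) {u v : V} {p : G.Walk u v} (hp : p.IsPath) :
    (p.map f).IsPath := by
  induction p with
  | nil => simp
  | @cons u b v hub q ih =>
    rw [Walk.cons_isPath_iff] at hp
    have hq := ih hp.1
    rw [Walk.map_cons, Walk.cons_isPath_iff]
    refine ⟨hq, fun hmem => ?_⟩
    have hsnd := hH.eq_snd_of_adj_start hq (f.map_adj hub).symm hmem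
    cases q with
    | nil => exact (f.map_adj hub).ne (by simpa using hsnd)
    | @cons _ s _ hbs q' =>
      have hus : u = s := hf b hub.symm hbs (by simpa using hsnd)
      exact hp.2 (by simp [hus])

theorem IsAcyclic.of_hom_of_injOn_neighborSet (hH : H.IsAcyclic) (f : G →g H)
    (hf : ∀ v, Set.InjOn f (G.neighborSet v)) : G.IsAcyclic := by
  rintro v (_ | ⟨hvb, q⟩) hc
  · exact hc.not_nil Walk.Nil.nil
  obtain ⟨hq, -⟩ := (Walk.cons_isCycle_iff q hvb).mp hc
  have hedge : q.map f = Walk.cons (f.map_adj hvb).symm .nil :=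
    congrArg Subtype.val <| (hH.subsingleton_path _ _).elim
      ⟨_, hq.map_of_injOn_neighborSet hH f hf⟩ (Path.singleton _)
  have hlen := congrArg Walk.length hedge
  have := hc.three_le_length
  simp only [Walk.length_map, Walk.length_cons, Walk.length_nil] at hlen this
  omega

end SimpleGraph

section TannerGraph

variable {m n : Type*} (H : Matrix m n (ZMod 2))

@[simp]
lemma tannerGraph_adj_inl_inl (i i' : m) : ¬(TannerGraph H).Adj (.inl i) (.inl i') := by
  simp [TannerGraph]

@[simp]
lemma tannerGraph_adj_inr_inr (j j' : n) : ¬(TannerGraph H).Adj (.inr j) (.inr j') := by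
  simp [TannerGraph]

@[simp]
lemma tannerGraph_adj_inl_inr (i : m) (j : n) :
    (TannerGraph H).Adj (.inl i) (.inr j) ↔ H i j = 1 := by
  simp [TannerGraph]

@[simp]
lemma tannerGraph_adj_inr_inl (i : m) (j : n) :
    (TannerGraph H).Adj (.inr j) (.inl i) ↔ H i j = 1 := by
  simp [TannerGraph]

end TannerGraph

section BlockOmega

variable {M N K : ℕ} (Λ : Matrix (Fin M) (Fin N) (ZMod 2)) (σ : Fin M → Fin N → Equiv.Perm (Fin K))

@[simp]
lemma blockOmega_apply_eq_one_iff (rc : Fin M × Fin K) (cc : Fin N × Fin K) :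
    blockOmega Λ σ rc cc = 1 ↔ Λ rc.1 cc.1 = 1 ∧ σ rc.1 cc.1 rc.2 = cc.2 := by
  simp [blockOmega]

def blockOmegaProj : TannerGraph (blockOmega Λ σ) →g TannerGraph Λ where
  toFun := Sum.map Prod.fst Prod.fst
  map_rel' := by
    rintro (⟨i, r⟩ | ⟨j, c⟩) (⟨i', r'⟩ | ⟨j', c'⟩) <;> simp_all

lemma blockOmegaProj_injOn_neighborSet (v : (Fin M × Fin K) ⊕ (Fin N × Fin K)) :
    Set.InjOn (blockOmegaProj Λ σ) ((TannerGraph (blockOmega Λ σ)).neighborSet v) := by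
  rintro (⟨i, r⟩ | ⟨j, c⟩) ha (⟨i', r'⟩ | ⟨j', c'⟩) hb hab <;>
    rcases v with ⟨i₀, r₀⟩ | ⟨j₀, c₀⟩ <;>
    simp_all [blockOmegaProj]
  -- left: two row neighbours `(i', r)`, `(i', r')` of a column vertex `(j₀, c₀)`
  exact (σ i' j₀).injective (ha.2.trans hb.symm)

end BlockOmega

/-- if the Tanner graph of the mother matrix `Λ` is acyclic, then so is
the Tanner graph of the block matrix `Ω`. -/
theorem stmt_18 (M N K : ℕ) (Λ : Matrix (Fin M) (Fin N) (ZMod 2))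
    (σ : Fin M → Fin N → Equiv.Perm (Fin K))
    (h : (TannerGraph Λ).IsAcyclic) :
    (TannerGraph (blockOmega Λ σ)).IsAcyclic :=
  h.of_hom_of_injOn_neighborSet (blockOmegaProj Λ σ) (blockOmegaProj_injOn_neighborSet Λ σ)
end
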